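/- arXiv:1705.01243 — 2 statements merged into one kernel-verified Lean document; each statement's English description precedes it below -/
import Mathlib

section
/- Let φ(λ) = bλ + ∫₀^∞ (1 - e^{-λt}) μ(dt) be a Bernstein function (b ≥ 0, ∫₀^∞ (1 ∧ t) μ(dt) < ∞). Then for each nonnegative integer n there exists a constant N(n) such that λⁿ |φ⁽ⁿ⁾(λ)| ≤ N(n) φ(λ) for all λ > 0, where φ⁽ⁿ⁾ denotes the n-th derivative of φ. -/
/-!
For `n ≥ 1` differentiation under the integral gives
`φ⁽ⁿ⁾(λ) = b·[n = 1] + (-1)ⁿ⁺¹ ∫ tⁿ e^{-λt} μ(dt)`. Since `eˣ - 1 ≥ xⁿ/n!`, we have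
`xⁿ e^{-x} ≤ n! (1 - e^{-x})` for `x ≥ 0`; with `x = λt` this bounds `λⁿ ∫ tⁿ e^{-λt} μ(dt)` by
`n! ∫ (1 - e^{-λt}) μ(dt) ≤ n! φ(λ)`, while `λ b ≤ φ(λ)`. So `N(n) = 1 + n!` works. The same
inequality provides the integrable dominating functions needed to differentiate under the integral.
-/

open Real Set MeasureTheory Filter Topology

theorem one_add_pow_div_factorial_le_exp {x : ℝ} (hx : 0 ≤ x) {k : ℕ} (hk : 1 ≤ k) :
    1 + x ^ k / k.factorial ≤ exp x := by
  have hsum := sum_le_exp_of_nonneg hx (k + 1)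
  rw [Finset.sum_range_succ] at hsum
  have hconst : 1 ≤ ∑ i ∈ Finset.range k, x ^ i / i.factorial := by
    simpa using Finset.single_le_sum (f := fun i ↦ x ^ i / (i.factorial : ℝ))
      (fun i _ ↦ by positivity) (Finset.mem_range.2 hk)
  linarith

theorem pow_mul_exp_neg_le_factorial_mul {x : ℝ} (hx : 0 ≤ x) {k : ℕ} (hk : 1 ≤ k) :
    x ^ k * exp (-x) ≤ k.factorial * (1 - exp (-x)) := by
  have h := le_sub_iff_add_le'.mpr (one_add_pow_div_factorial_le_exp hx hk)
  rw [div_le_iff₀ (by positivity)] at h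
  calc x ^ k * exp (-x) ≤ (exp x - 1) * k.factorial * exp (-x) := by gcongr
    _ = k.factorial * (1 - exp (-x)) := by
      rw [exp_neg]; field_simp

theorem pow_mul_pow_mul_exp_neg_mul_le {k : ℕ} (hk : 1 ≤ k) {l t : ℝ} (hl : 0 ≤ l)
    (ht : 0 ≤ t) :
    l ^ k * (t ^ k * exp (-(l * t))) ≤ k.factorial * (1 - exp (-(l * t))) := by
  rw [← mul_assoc, ← mul_pow]
  exact pow_mul_exp_neg_le_factorial_mul (by positivity) hk

theorem one_sub_exp_neg_nonneg {x : ℝ} (hx : 0 ≤ x) : 0 ≤ 1 - exp (-x) := by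
  simpa using hx

theorem one_sub_exp_neg_le_min (x : ℝ) : 1 - exp (-x) ≤ min 1 x :=
  le_min (by linarith [exp_pos (-x)]) (by linarith [add_one_le_exp (-x)])

theorem min_one_mul_le_max_mul_min {c t : ℝ} (ht : 0 ≤ t) :
    min 1 (c * t) ≤ max 1 c * min 1 t := by
  rcases le_total t 1 with h | h
  · rw [min_eq_right h]
    exact (min_le_right _ _).trans (by gcongr; exact le_max_right _ _)
  · rw [min_eq_left h, mul_one]
    exact (min_le_left _ _).trans (le_max_left _ _)

theorem pow_mul_exp_neg_mul_le_of_le {k : ℕ} {c x t : ℝ} (hcx : c ≤ x) (ht : 0 ≤ t) :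
    ‖t ^ k * exp (-(x * t))‖ ≤ t ^ k * exp (-(c * t)) := by
  rw [Real.norm_of_nonneg (by positivity)]
  gcongr

noncomputable def laplaceMoment (ν : Measure ℝ) (k : ℕ) (l : ℝ) : ℝ :=
  ∫ t, t ^ k * exp (-(l * t)) ∂ν

section BernsteinIntegral

variable {ν : Measure ℝ}

theorem integrable_one_sub_exp_neg_mul (hpos : ∀ᵐ t ∂ν, 0 < t)
    (hmin : Integrable (fun t ↦ min 1 t) ν) {l : ℝ} (hl : 0 ≤ l) :
    Integrable (fun t ↦ 1 - exp (-(l * t))) ν := by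
  refine (hmin.const_mul (max 1 l)).mono' (by fun_prop) ?_
  filter_upwards [hpos] with t ht
  rw [Real.norm_of_nonneg (one_sub_exp_neg_nonneg (by positivity))]
  exact (one_sub_exp_neg_le_min _).trans (min_one_mul_le_max_mul_min ht.le)

theorem integrable_pow_mul_exp_neg_mul (hpos : ∀ᵐ t ∂ν, 0 < t)
    (hmin : Integrable (fun t ↦ min 1 t) ν) {k : ℕ} (hk : 1 ≤ k) {l : ℝ} (hl : 0 < l) :
    Integrable (fun t ↦ t ^ k * exp (-(l * t))) ν := by
  refine ((integrable_one_sub_exp_neg_mul hpos hmin hl.le).const_mul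
    (k.factorial / l ^ k)).mono' (by fun_prop) ?_
  filter_upwards [hpos] with t ht
  rw [Real.norm_of_nonneg (by positivity), div_mul_eq_mul_div, le_div_iff₀ (by positivity),
    mul_comm]
  exact pow_mul_pow_mul_exp_neg_mul_le hk hl.le ht.le

theorem hasDerivAt_laplaceMoment (hpos : ∀ᵐ t ∂ν, 0 < t)
    (hmin : Integrable (fun t ↦ min 1 t) ν) {k : ℕ} (hk : 1 ≤ k) {l : ℝ} (hl : 0 < l) :
    HasDerivAt (laplaceMoment ν k) (-laplaceMoment ν (k + 1) l) l := by
  have key := hasDerivAt_integral_of_dominated_loc_of_deriv_le (μ := ν)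
    (F := fun x t ↦ t ^ k * exp (-(x * t)))
    (F' := fun x t ↦ -(t ^ (k + 1) * exp (-(x * t))))
    (bound := fun t ↦ t ^ (k + 1) * exp (-(l / 2 * t)))
    (Ioi_mem_nhds (half_lt_self hl)) (.of_forall fun _ ↦ by fun_prop)
    (integrable_pow_mul_exp_neg_mul hpos hmin hk hl) (by fun_prop) ?_
    (integrable_pow_mul_exp_neg_mul hpos hmin (by omega) (half_pos hl)) ?_
  · rw [integral_neg] at key
    exact key.2
  · filter_upwards [hpos] with t ht x hx
    rw [norm_neg]
    exact pow_mul_exp_neg_mul_le_of_le (le_of_lt hx) ht.le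
  · refine .of_forall fun t x _ ↦ ?_
    have hlin : HasDerivAt (fun x : ℝ ↦ -(x * t)) (-t) x := (hasDerivAt_mul_const t).neg
    exact (hlin.exp.const_mul (t ^ k)).congr_deriv (by ring)

theorem hasDerivAt_integral_one_sub_exp_neg_mul (hpos : ∀ᵐ t ∂ν, 0 < t)
    (hmin : Integrable (fun t ↦ min 1 t) ν) {l : ℝ} (hl : 0 < l) :
    HasDerivAt (fun x ↦ ∫ t, (1 - exp (-(x * t))) ∂ν) (laplaceMoment ν 1 l) l := by
  refine (hasDerivAt_integral_of_dominated_loc_of_deriv_le (μ := ν)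
    (F := fun x t ↦ 1 - exp (-(x * t)))
    (F' := fun x t ↦ t ^ 1 * exp (-(x * t)))
    (bound := fun t ↦ t ^ 1 * exp (-(l / 2 * t)))
    (Ioi_mem_nhds (half_lt_self hl)) (.of_forall fun _ ↦ by fun_prop)
    (integrable_one_sub_exp_neg_mul hpos hmin hl.le) (by fun_prop) ?_
    (integrable_pow_mul_exp_neg_mul hpos hmin le_rfl (half_pos hl)) ?_).2
  · filter_upwards [hpos] with t ht x hx
    exact pow_mul_exp_neg_mul_le_of_le (le_of_lt hx) ht.le
  · refine .of_forall fun t x _ ↦ ?_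
    have hlin : HasDerivAt (fun x : ℝ ↦ -(x * t)) (-t) x := (hasDerivAt_mul_const t).neg
    exact (hlin.exp.const_sub 1).congr_deriv (by ring)

theorem laplaceMoment_nonneg (hpos : ∀ᵐ t ∂ν, 0 < t) (k : ℕ) (l : ℝ) :
    0 ≤ laplaceMoment ν k l :=
  integral_nonneg_of_ae (hpos.mono fun t ht ↦ by positivity)

theorem pow_mul_laplaceMoment_le (hpos : ∀ᵐ t ∂ν, 0 < t)
    (hmin : Integrable (fun t ↦ min 1 t) ν) {k : ℕ} (hk : 1 ≤ k) {l : ℝ} (hl : 0 < l) :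
    l ^ k * laplaceMoment ν k l ≤ k.factorial * ∫ t, (1 - exp (-(l * t))) ∂ν := by
  rw [laplaceMoment, ← integral_const_mul, ← integral_const_mul]
  refine integral_mono_ae ((integrable_pow_mul_exp_neg_mul hpos hmin hk hl).const_mul _)
    ((integrable_one_sub_exp_neg_mul hpos hmin hl.le).const_mul _) ?_
  filter_upwards [hpos] with t ht
  exact pow_mul_pow_mul_exp_neg_mul_le hk hl.le ht.le

theorem iteratedDeriv_succ_eq_laplaceMoment (hpos : ∀ᵐ t ∂ν, 0 < t)
    (hmin : Integrable (fun t ↦ min 1 t) ν) {b : ℝ} {φ : ℝ → ℝ}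
    (hφ : ∀ l, 0 < l → φ l = b * l + ∫ t, (1 - exp (-(l * t))) ∂ν) (n : ℕ) {l : ℝ}
    (hl : 0 < l) :
    iteratedDeriv (n + 1) φ l =
      (if n = 0 then b else 0) + (-1) ^ n * laplaceMoment ν (n + 1) l := by
  induction n generalizing l with
  | zero =>
    have heq : φ =ᶠ[𝓝 l] fun x ↦ b * x + ∫ t, (1 - exp (-(x * t))) ∂ν :=
      eventually_of_mem (Ioi_mem_nhds hl) hφ
    have hd : HasDerivAt (fun x ↦ b * x + ∫ t, (1 - exp (-(x * t))) ∂ν)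
        (b + laplaceMoment ν 1 l) l :=
      (((hasDerivAt_id' l).const_mul b).add
        (hasDerivAt_integral_one_sub_exp_neg_mul hpos hmin hl)).congr_deriv (by rw [mul_one])
    rw [iteratedDeriv_one, heq.deriv_eq, hd.deriv, if_pos rfl]
    ring
  | succ n ih =>
    have heq : iteratedDeriv (n + 1) φ =ᶠ[𝓝 l]
        fun x ↦ (if n = 0 then b else 0) + (-1) ^ n * laplaceMoment ν (n + 1) x :=
      eventually_of_mem (Ioi_mem_nhds hl) fun x hx ↦ ih hx
    have hd := ((hasDerivAt_laplaceMoment hpos hmin (Nat.le_add_left 1 n) hl).const_mul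
      ((-1 : ℝ) ^ n)).const_add (if n = 0 then b else 0)
    rw [iteratedDeriv_succ, heq.deriv_eq, hd.deriv, if_neg n.succ_ne_zero]
    ring

theorem integral_one_sub_exp_neg_mul_nonneg (hpos : ∀ᵐ t ∂ν, 0 < t) {l : ℝ} (hl : 0 ≤ l) :
    0 ≤ ∫ t, (1 - exp (-(l * t))) ∂ν :=
  integral_nonneg_of_ae (hpos.mono fun t ht ↦ one_sub_exp_neg_nonneg (by positivity))

theorem pow_succ_mul_abs_iteratedDeriv_succ_le (hpos : ∀ᵐ t ∂ν, 0 < t)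
    (hmin : Integrable (fun t ↦ min 1 t) ν) {b : ℝ} (hb : 0 ≤ b) {φ : ℝ → ℝ}
    (hφ : ∀ l, 0 < l → φ l = b * l + ∫ t, (1 - exp (-(l * t))) ∂ν) (n : ℕ) {l : ℝ}
    (hl : 0 < l) :
    l ^ (n + 1) * |iteratedDeriv (n + 1) φ l| ≤ (1 + (n + 1).factorial) * φ l := by
  have hJ := integral_one_sub_exp_neg_mul_nonneg hpos hl.le
  have hbl : b * l ≤ φ l := hφ l hl ▸ le_add_of_nonneg_right hJ
  have hJφ : ∫ t, (1 - exp (-(l * t))) ∂ν ≤ φ l :=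
    hφ l hl ▸ le_add_of_nonneg_left (by positivity)
  have hM := laplaceMoment_nonneg hpos (n + 1) l
  have hc : 0 ≤ if n = 0 then b else 0 := by split_ifs <;> simp [hb]
  have hcφ : l ^ (n + 1) * (if n = 0 then b else 0) ≤ φ l := by
    split_ifs with h
    · simpa [h, mul_comm] using hbl
    · simpa using (by positivity : 0 ≤ b * l).trans hbl
  rw [iteratedDeriv_succ_eq_laplaceMoment hpos hmin hφ n hl]
  calc l ^ (n + 1) * |(if n = 0 then b else 0) + (-1) ^ n * laplaceMoment ν (n + 1) l|
      ≤ l ^ (n + 1) * (if n = 0 then b else 0) + l ^ (n + 1) * laplaceMoment ν (n + 1) l := by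
        rw [← mul_add]
        gcongr
        refine (abs_add_le _ _).trans ?_
        simp [abs_of_nonneg hc, abs_of_nonneg hM]
    _ ≤ φ l + (n + 1).factorial * φ l :=
        add_le_add hcφ ((pow_mul_laplaceMoment_le hpos hmin (Nat.le_add_left 1 n) hl).trans
          (by gcongr))
    _ = (1 + (n + 1).factorial) * φ l := by ring

end BernsteinIntegral

/-- For a Bernstein function `φ(λ) = bλ + ∫₀^∞ (1 - e^{-λt}) μ(dt)`, for every
`n` there is a constant `N(n)` with `λⁿ |φ⁽ⁿ⁾(λ)| ≤ N(n) φ(λ)` for all `λ > 0`. -/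
theorem stmt_3 (b : ℝ) (hb : 0 ≤ b) (μ : Measure ℝ)
    (hμ : ∫⁻ t in Set.Ioi (0 : ℝ), ENNReal.ofReal (min 1 t) ∂μ < ⊤)
    (φ : ℝ → ℝ)
    (hφ : ∀ l : ℝ, 0 < l →
      φ l = b * l + ∫ t in Set.Ioi (0 : ℝ), (1 - Real.exp (-(l * t))) ∂μ)
    (n : ℕ) :
    ∃ N : ℝ, 0 < N ∧ ∀ l : ℝ, 0 < l →
      l ^ n * |iteratedDeriv n φ l| ≤ N * φ l := by
  set ν := μ.restrict (Ioi 0)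
  have hpos : ∀ᵐ t ∂ν, 0 < t := ae_restrict_mem measurableSet_Ioi
  have hmin : Integrable (fun t ↦ min 1 t) ν :=
    ⟨by fun_prop,
      (hasFiniteIntegral_iff_ofReal (hpos.mono fun t ht ↦ le_min zero_le_one ht.le)).2 hμ⟩
  refine ⟨1 + n.factorial, by positivity, fun l hl ↦ ?_⟩
  cases n with
  | zero =>
    have hφ_nonneg : 0 ≤ φ l := by
      rw [hφ l hl]
      exact add_nonneg (by positivity) (integral_one_sub_exp_neg_mul_nonneg hpos hl.le)
    simp only [pow_zero, iteratedDeriv_zero, one_mul, abs_of_nonneg hφ_nonneg,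
      Nat.factorial_zero, Nat.cast_one]
    linarith
  | succ n => exact pow_succ_mul_abs_iteratedDeriv_succ_le hpos hmin hb hφ n hl
end

section
/- Suppose Ψ(t,ξ) is a complex-valued symbol with Re Ψ(t,ξ) ≤ -δ₆ ψ(|ξ|²) for all t > 0, ξ ∈ ℝ^d, where ψ satisfies ψ > 0, nondecreasing, and the weak scaling bounds, and let a_t = (ψ⁻¹(t⁻¹))^{1/2}. Then there exists N > 0 depending only on δ₄, δ₅, δ₆, N₇, N₈ such that t·Re Ψ(r, a_t ξ) ≤ -N|ξ|^{δ̃₁} for all t, r > 0 and ξ ∈ ℝ^d, where δ̃₁(ξ) = 2δ₄ for |ξ| ≥ 1 and 2δ₅ for |ξ| < 1. -/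
/-!
Write `m = ψ⁻¹(1/t)`, so that `|a_t ξ|² = m |ξ|²`. Lower scaling forces `ψ → 0` at `0⁺` and
`ψ → ∞` at `∞`, hence `0 < m < ∞`. Since `ψ` may jump, `ψ m ≥ 1/t` holds only up to the factor
`N₈ 2^δ₅`, obtained by comparing `m` with a point of the level set `{1/t ≤ ψ}` in `[m, 2m)`.
Weak scaling with ratio `|ξ|²` (the lower bound when `|ξ| ≥ 1`, the upper one when `|ξ| < 1`)
gives `ψ (m |ξ|²) ≳ |ξ|^δ̃₁ ψ m`, and ellipticity concludes.
-/

open Real Set Filter Topology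

/-- The generalized inverse `ψ⁻¹(y)` of a (possibly discontinuous) nondecreasing `ψ`. -/
noncomputable def genInv (ψ : ℝ → ℝ) (y : ℝ) : ℝ :=
  sInf {s : ℝ | 0 < s ∧ y ≤ ψ s}

section WeakScaling

variable {ψ : ℝ → ℝ} {δ₄ δ₅ N₇ N₈ : ℝ}

theorem mul_rpow_mul_le_of_lowerScaling (hpos : ∀ x : ℝ, 0 < x → 0 < ψ x)
    (hlow : ∀ l₁ l₂ : ℝ, 0 < l₁ → l₁ ≤ l₂ → N₇ * (l₂ / l₁) ^ δ₄ ≤ ψ l₂ / ψ l₁)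
    {s l : ℝ} (hs : 0 < s) (hl : 1 ≤ l) :
    N₇ * l ^ δ₄ * ψ s ≤ ψ (s * l) := by
  have h := hlow s (s * l) hs (le_mul_of_one_le_right hs.le hl)
  rwa [mul_div_cancel_left₀ l hs.ne', le_div_iff₀ (hpos s hs)] at h

theorem rpow_mul_le_mul_of_upperScaling (hpos : ∀ x : ℝ, 0 < x → 0 < ψ x)
    (hup : ∀ l₁ l₂ : ℝ, 0 < l₁ → l₁ ≤ l₂ → ψ l₂ / ψ l₁ ≤ N₈ * (l₂ / l₁) ^ δ₅)
    {s l : ℝ} (hs : 0 < s) (hl₀ : 0 < l) (hl : l ≤ 1) :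
    l ^ δ₅ * ψ s ≤ N₈ * ψ (s * l) := by
  have hsl : 0 < s * l := mul_pos hs hl₀
  have h := hup (s * l) s hsl (mul_le_of_le_one_right hs.le hl)
  rw [div_le_iff₀ (hpos _ hsl), div_mul_cancel_left₀ hs.ne', inv_rpow hl₀.le] at h
  have hlδ : 0 < l ^ δ₅ := rpow_pos_of_pos hl₀ δ₅
  calc l ^ δ₅ * ψ s ≤ l ^ δ₅ * (N₈ * (l ^ δ₅)⁻¹ * ψ (s * l)) := by gcongr
    _ = N₈ * ψ (s * l) := by field_simp

theorem mul_rpow_mul_le_of_scaling (hN₈ : 0 < N₈) (hpos : ∀ x : ℝ, 0 < x → 0 < ψ x)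
    (hlow : ∀ l₁ l₂ : ℝ, 0 < l₁ → l₁ ≤ l₂ → N₇ * (l₂ / l₁) ^ δ₄ ≤ ψ l₂ / ψ l₁)
    (hup : ∀ l₁ l₂ : ℝ, 0 < l₁ → l₁ ≤ l₂ → ψ l₂ / ψ l₁ ≤ N₈ * (l₂ / l₁) ^ δ₅)
    {s l : ℝ} (hs : 0 < s) (hl₀ : 0 < l) :
    min N₇ N₈⁻¹ * l ^ (if 1 ≤ l then δ₄ else δ₅) * ψ s ≤ ψ (s * l) := by
  have hψs := (hpos s hs).le
  split_ifs with hl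
  · calc min N₇ N₈⁻¹ * l ^ δ₄ * ψ s ≤ N₇ * l ^ δ₄ * ψ s := by gcongr; exact min_le_left _ _
      _ ≤ ψ (s * l) := mul_rpow_mul_le_of_lowerScaling hpos hlow hs hl
  · calc min N₇ N₈⁻¹ * l ^ δ₅ * ψ s ≤ N₈⁻¹ * (l ^ δ₅ * ψ s) := by
          rw [mul_assoc]; gcongr; exact min_le_right _ _
      _ ≤ N₈⁻¹ * (N₈ * ψ (s * l)) :=
          mul_le_mul_of_nonneg_left
            (rpow_mul_le_mul_of_upperScaling hpos hup hs hl₀ (not_le.mp hl).le)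
            (inv_nonneg.mpr hN₈.le)
      _ = ψ (s * l) := inv_mul_cancel_left₀ hN₈.ne' _

theorem tendsto_atTop_of_lowerScaling (hN₇ : 0 < N₇) (hδ₄ : 0 < δ₄)
    (hpos : ∀ x : ℝ, 0 < x → 0 < ψ x)
    (hlow : ∀ l₁ l₂ : ℝ, 0 < l₁ → l₁ ≤ l₂ → N₇ * (l₂ / l₁) ^ δ₄ ≤ ψ l₂ / ψ l₁) :
    Tendsto ψ atTop atTop := by
  refine tendsto_atTop_mono' _ ?_
    (((tendsto_rpow_atTop hδ₄).const_mul_atTop hN₇).atTop_mul_const (hpos 1 one_pos))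
  filter_upwards [eventually_ge_atTop 1] with l hl
  simpa using mul_rpow_mul_le_of_lowerScaling hpos hlow one_pos hl

theorem tendsto_nhdsGT_zero_of_lowerScaling (hN₇ : 0 < N₇) (hδ₄ : 0 < δ₄)
    (hpos : ∀ x : ℝ, 0 < x → 0 < ψ x)
    (hlow : ∀ l₁ l₂ : ℝ, 0 < l₁ → l₁ ≤ l₂ → N₇ * (l₂ / l₁) ^ δ₄ ≤ ψ l₂ / ψ l₁) :
    Tendsto ψ (𝓝[>] 0) (𝓝 0) := by
  have hrpow : Tendsto (fun s : ℝ => ψ 1 / N₇ * s ^ δ₄) (𝓝[>] 0) (𝓝 0) := by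
    have := ((continuous_rpow_const hδ₄.le).tendsto 0).const_mul (ψ 1 / N₇)
    rw [zero_rpow hδ₄.ne', mul_zero] at this
    exact this.mono_left nhdsWithin_le_nhds
  refine tendsto_of_tendsto_of_tendsto_of_le_of_le' tendsto_const_nhds hrpow ?_ ?_
  · filter_upwards [self_mem_nhdsWithin] with s hs using (hpos s hs).le
  · filter_upwards [Ioo_mem_nhdsGT one_pos] with s ⟨hs, hs1⟩
    have h := mul_rpow_mul_le_of_lowerScaling hpos hlow hs (one_le_inv₀ hs |>.mpr hs1.le)
    rw [mul_inv_cancel₀ hs.ne', inv_rpow hs.le] at h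
    rw [div_mul_eq_mul_div, le_div_iff₀ hN₇]
    calc ψ s * N₇ = N₇ * (s ^ δ₄)⁻¹ * ψ s * s ^ δ₄ := by
          field_simp [(rpow_pos_of_pos hs δ₄).ne']
      _ ≤ ψ 1 * s ^ δ₄ := by gcongr

end WeakScaling

section GeneralizedInverse

variable {ψ : ℝ → ℝ} {y : ℝ}

theorem nonempty_genInv_set (hψ : Tendsto ψ atTop atTop) :
    {s : ℝ | 0 < s ∧ y ≤ ψ s}.Nonempty :=
  ((eventually_gt_atTop 0).and (hψ.eventually_ge_atTop y)).exists

theorem genInv_pos (hψ₀ : Tendsto ψ (𝓝[>] 0) (𝓝 0)) (hψ : Tendsto ψ atTop atTop) (hy : 0 < y) :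
    0 < genInv ψ y := by
  obtain ⟨ε, hε, hsmall⟩ :=
    (nhdsGT_basis (0 : ℝ)).eventually_iff.mp (hψ₀.eventually (gt_mem_nhds hy))
  refine hε.trans_le (le_csInf (nonempty_genInv_set hψ) fun s ⟨hs, hys⟩ => ?_)
  by_contra! hsε
  exact (hsmall ⟨hs, hsε⟩).not_ge hys

theorem exists_lt_two_mul_genInv (hψ : Tendsto ψ atTop atTop) (hm : 0 < genInv ψ y) :
    ∃ s, genInv ψ y ≤ s ∧ s < 2 * genInv ψ y ∧ y ≤ ψ s := by
  obtain ⟨s, hsS, hs⟩ := exists_lt_of_csInf_lt (nonempty_genInv_set hψ)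
    (show genInv ψ y < 2 * genInv ψ y by linarith)
  exact ⟨s, csInf_le ⟨0, fun x hx => hx.1.le⟩ hsS, hs, hsS.2⟩

/-- Although `ψ (genInv ψ y)` may be smaller than `y` when `ψ` jumps, upper scaling bounds the loss. -/
theorem le_mul_apply_genInv {δ₅ N₈ : ℝ} (hδ₅ : 0 ≤ δ₅) (hN₈ : 0 < N₈)
    (hpos : ∀ x : ℝ, 0 < x → 0 < ψ x)
    (hup : ∀ l₁ l₂ : ℝ, 0 < l₁ → l₁ ≤ l₂ → ψ l₂ / ψ l₁ ≤ N₈ * (l₂ / l₁) ^ δ₅)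
    (hψ : Tendsto ψ atTop atTop) (hm : 0 < genInv ψ y) :
    y ≤ N₈ * 2 ^ δ₅ * ψ (genInv ψ y) := by
  obtain ⟨s, hms, hs2m, hys⟩ := exists_lt_two_mul_genInv hψ hm
  have h := hup _ s hm hms
  rw [div_le_iff₀ (hpos _ hm)] at h
  have hratio : (s / genInv ψ y) ^ δ₅ ≤ 2 ^ δ₅ :=
    rpow_le_rpow (div_pos (hm.trans_le hms) hm).le ((div_le_iff₀ hm).mpr hs2m.le) hδ₅
  calc y ≤ ψ s := hys
    _ ≤ N₈ * (s / genInv ψ y) ^ δ₅ * ψ (genInv ψ y) := h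
    _ ≤ N₈ * 2 ^ δ₅ * ψ (genInv ψ y) := by gcongr; exact (hpos _ hm).le

end GeneralizedInverse

theorem sq_rpow_ite {x : ℝ} (hx : 0 ≤ x) (a b : ℝ) :
    (x ^ 2) ^ (if 1 ≤ x ^ 2 then a else b) = x ^ (if 1 ≤ x then 2 * a else 2 * b) := by
  simp only [one_le_sq_iff₀ hx]
  rw [← rpow_natCast, ← rpow_mul hx]
  split_ifs <;> norm_num

theorem stmt_8_general {d : ℕ} (ψ : ℝ → ℝ) (δ₄ δ₅ δ₆ N₇ N₈ : ℝ)
    (hδ₄ : 0 < δ₄) (hδ : δ₄ ≤ δ₅) (hδ₆ : 0 < δ₆) (hN₇ : 0 < N₇) (hN₈ : 0 < N₈)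
    (hpos : ∀ x : ℝ, 0 < x → 0 < ψ x)
    (hscale : ∀ l₁ l₂ : ℝ, 0 < l₁ → l₁ ≤ l₂ →
      N₇ * (l₂ / l₁) ^ δ₄ ≤ ψ l₂ / ψ l₁ ∧ ψ l₂ / ψ l₁ ≤ N₈ * (l₂ / l₁) ^ δ₅)
    (Ψ : ℝ → EuclideanSpace ℝ (Fin d) → ℂ)
    (hΨ : ∀ (t : ℝ) (ξ : EuclideanSpace ℝ (Fin d)), 0 < t → ξ ≠ 0 →
      (Ψ t ξ).re ≤ -(δ₆ * ψ (‖ξ‖ ^ 2))) :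
    ∃ N : ℝ, 0 < N ∧ ∀ (t r : ℝ) (ξ : EuclideanSpace ℝ (Fin d)),
      0 < t → 0 < r → ξ ≠ 0 →
      t * (Ψ r ((Real.sqrt (sInf {s : ℝ | 0 < s ∧ t⁻¹ ≤ ψ s})) • ξ)).re ≤
        -(N * ‖ξ‖ ^ (if 1 ≤ ‖ξ‖ then 2 * δ₄ else 2 * δ₅)) := by
  have hlow := fun l₁ l₂ h₁ h₂ => (hscale l₁ l₂ h₁ h₂).1
  have hup := fun l₁ l₂ h₁ h₂ => (hscale l₁ l₂ h₁ h₂).2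
  have hψ := tendsto_atTop_of_lowerScaling hN₇ hδ₄ hpos hlow
  have hψ₀ := tendsto_nhdsGT_zero_of_lowerScaling hN₇ hδ₄ hpos hlow
  set c := min N₇ N₈⁻¹
  have hc : 0 < c := lt_min hN₇ (inv_pos.mpr hN₈)
  have hK : 0 < N₈ * 2 ^ δ₅ := mul_pos hN₈ (rpow_pos_of_pos two_pos δ₅)
  refine ⟨δ₆ * c / (N₈ * 2 ^ δ₅), by positivity, fun t r ξ ht hr hξ => ?_⟩
  set m := genInv ψ t⁻¹
  have hm : 0 < m := genInv_pos hψ₀ hψ (inv_pos.mpr ht)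
  have htm : 1 ≤ N₈ * 2 ^ δ₅ * (t * ψ m) := by
    have := le_mul_apply_genInv (hδ₄.le.trans hδ) hN₈ hpos hup hψ hm
    rw [inv_le_iff_one_le_mul₀ ht] at this
    linarith
  have hnorm : ‖sqrt m • ξ‖ ^ 2 = m * ‖ξ‖ ^ 2 := by
    rw [norm_smul, norm_of_nonneg (sqrt_nonneg m), mul_pow, sq_sqrt hm.le]
  have hRe := hΨ r _ hr (smul_ne_zero (sqrt_pos.mpr hm).ne' hξ)
  have hscal := mul_rpow_mul_le_of_scaling hN₈ hpos hlow hup hm (pow_pos (norm_pos_iff.mpr hξ) 2)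
  rw [sq_rpow_ite (norm_nonneg ξ)] at hscal
  rw [hnorm] at hRe
  set e := ‖ξ‖ ^ (if 1 ≤ ‖ξ‖ then 2 * δ₄ else 2 * δ₅)
  have he : 0 ≤ e := by positivity
  calc t * (Ψ r (sqrt m • ξ)).re ≤ -(δ₆ * (t * ψ (m * ‖ξ‖ ^ 2))) := by nlinarith
    _ ≤ -(δ₆ * (t * (c * e * ψ m))) := by gcongr
    _ ≤ -(δ₆ * c / (N₈ * 2 ^ δ₅) * e) := by
        rw [div_mul_eq_mul_div, neg_le_neg_iff, div_le_iff₀ hK]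
        nlinarith [mul_nonneg (mul_nonneg hδ₆.le hc.le) he]

/-- If `Re Ψ(t,ξ) ≤ -δ₆ ψ(|ξ|²)` with `ψ` satisfying the weak scaling bounds,
and `a_t = (ψ⁻¹(1/t))^{1/2}`, then `t Re Ψ(r, a_t ξ) ≤ -N |ξ|^{δ̃₁}`. -/
theorem stmt_8 {d : ℕ} (ψ : ℝ → ℝ) (δ₄ δ₅ δ₆ N₇ N₈ : ℝ)
    (hδ₄ : 0 < δ₄) (hδ : δ₄ ≤ δ₅) (hδ₆ : 0 < δ₆) (hN₇ : 0 < N₇) (hN₈ : 0 < N₈)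
    (hpos : ∀ x : ℝ, 0 < x → 0 < ψ x)
    (hmono : ∀ x y : ℝ, 0 < x → x ≤ y → ψ x ≤ ψ y)
    (hscale : ∀ l₁ l₂ : ℝ, 0 < l₁ → l₁ ≤ l₂ →
      N₇ * (l₂ / l₁) ^ δ₄ ≤ ψ l₂ / ψ l₁ ∧ ψ l₂ / ψ l₁ ≤ N₈ * (l₂ / l₁) ^ δ₅)
    (Ψ : ℝ → EuclideanSpace ℝ (Fin d) → ℂ)
    (hΨ : ∀ (t : ℝ) (ξ : EuclideanSpace ℝ (Fin d)), 0 < t → ξ ≠ 0 →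
      (Ψ t ξ).re ≤ -(δ₆ * ψ (‖ξ‖ ^ 2))) :
    ∃ N : ℝ, 0 < N ∧ ∀ (t r : ℝ) (ξ : EuclideanSpace ℝ (Fin d)),
      0 < t → 0 < r → ξ ≠ 0 →
      t * (Ψ r ((Real.sqrt (sInf {s : ℝ | 0 < s ∧ t⁻¹ ≤ ψ s})) • ξ)).re ≤
        -(N * ‖ξ‖ ^ (if 1 ≤ ‖ξ‖ then 2 * δ₄ else 2 * δ₅)) :=
  stmt_8_general ψ δ₄ δ₅ δ₆ N₇ N₈ hδ₄ hδ hδ₆ hN₇ hN₈ hpos hscale Ψ hΨ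
end
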